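/- arXiv:2009.11130 — 4 statements merged into one kernel-verified Lean document; each statement's English description precedes it below -/
import Mathlib

section
/- Let p be a prime and let (G, χ) be a (1,∞)-cyclotomic pair. Then the Laurent extension (G((t)), χ̂), where G((t)) = ℤ_p ⋊_χ G and χ̂ = χ ∘ pr_G, is again a (1,∞)-cyclotomic pair. (This is the paper's Proposition 7.2.) -/
noncomputable section

/-- A `(1,∞)`-cyclotomic pair: a (profinite) group `G` together with a continuous character
`χ : G → ℤ_pˣ` such that for every open subgroup `H ≤ G`, every (locally constant)
`χ̄`-twisted `1`-cocycle `z : H → ℤ/pℤ` lifts, modulo coboundaries, to a continuous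
`χ`-twisted `1`-cocycle `Z : H → ℤ_p`. -/
def IsCyclotomicPairInf (p : ℕ) [Fact p.Prime] (G : Type) [Group G] [TopologicalSpace G]
    (χ : G →* ℤ_[p]ˣ) : Prop :=
  Continuous (fun g : G => (χ g : ℤ_[p])) ∧
  ∀ H : Subgroup G, IsOpen (H : Set G) →
    ∀ z : H → ZMod p, IsLocallyConstant z →
      (∀ g h : H, z (g * h) = z g + PadicInt.toZMod (χ (g : G) : ℤ_[p]) * z h) →
      ∃ (Z : H → ℤ_[p]) (m : ZMod p), Continuous Z ∧
        (∀ g h : H, Z (g * h) = Z g + (χ (g : G) : ℤ_[p]) * Z h) ∧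
        ∀ g : H, PadicInt.toZMod (Z g) =
          z g + (PadicInt.toZMod (χ (g : G) : ℤ_[p]) - 1) * m

/-- The Laurent extension `G((t)) = ℤ_p ⋊_χ G`: underlying space `ℤ_p × G`,
multiplication `(x,g)(y,h) = (x + χ(g)y, gh)`. -/
structure Laurent (p : ℕ) [Fact p.Prime] (G : Type) [Group G] (χ : G →* ℤ_[p]ˣ) where
  x : ℤ_[p]
  g : G

namespace Laurent

variable {p : ℕ} [Fact p.Prime] {G : Type} [Group G] {χ : G →* ℤ_[p]ˣ}

@[ext]
theorem ext' {a b : Laurent p G χ} (h1 : a.x = b.x) (h2 : a.g = b.g) : a = b := by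
  cases a; cases b; cases h1; cases h2; rfl

instance : Mul (Laurent p G χ) :=
  ⟨fun a b => ⟨a.x + (χ a.g : ℤ_[p]) * b.x, a.g * b.g⟩⟩

instance : One (Laurent p G χ) := ⟨⟨0, 1⟩⟩

instance : Inv (Laurent p G χ) :=
  ⟨fun a => ⟨-((((χ a.g)⁻¹ : ℤ_[p]ˣ) : ℤ_[p]) * a.x), a.g⁻¹⟩⟩

@[simp] theorem mul_x (a b : Laurent p G χ) :
    (a * b).x = a.x + (χ a.g : ℤ_[p]) * b.x := rfl
@[simp] theorem mul_g (a b : Laurent p G χ) : (a * b).g = a.g * b.g := rfl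
@[simp] theorem one_x : (1 : Laurent p G χ).x = 0 := rfl
@[simp] theorem one_g : (1 : Laurent p G χ).g = 1 := rfl
@[simp] theorem inv_x (a : Laurent p G χ) :
    (a⁻¹).x = -((((χ a.g)⁻¹ : ℤ_[p]ˣ) : ℤ_[p]) * a.x) := rfl
@[simp] theorem inv_g (a : Laurent p G χ) : (a⁻¹).g = a.g⁻¹ := rfl

instance : Group (Laurent p G χ) where
  mul_assoc a b c := by
    ext
    · simp only [mul_x, mul_g, map_mul, Units.val_mul]
      ring
    · simp [mul_assoc]
  one_mul a := by ext <;> simp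
  mul_one a := by ext <;> simp
  inv_mul_cancel a := by
    ext
    · simp only [mul_x, inv_x, inv_g, map_inv, one_x]
      ring
    · simp

/-- The product topology on `G((t)) = ℤ_p × G`. -/
instance instTopLaurent [TopologicalSpace G] : TopologicalSpace (Laurent p G χ) :=
  TopologicalSpace.induced (fun a => (a.x, a.g)) inferInstance

variable (p G χ) in
/-- The character `χ̂ = χ ∘ pr_G` of the Laurent extension. -/
def chiHat : Laurent p G χ →* ℤ_[p]ˣ where
  toFun a := χ a.g
  map_one' := by simp
  map_mul' a b := by simp

end Laurent

namespace CycAux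

open PadicInt

variable {p : ℕ} [Fact p.Prime]


lemma dvd_iff_toZModPow_eq (n : ℕ) (a b : ℤ_[p]) :
    (p:ℤ_[p])^n ∣ a - b ↔ toZModPow n a = toZModPow n b := by
  rw [← sub_eq_zero, ← map_sub, ← RingHom.mem_ker, ker_toZModPow,
    Ideal.mem_span_singleton]

lemma dvd_iff_toZMod_eq (a b : ℤ_[p]) :
    (p:ℤ_[p]) ∣ a - b ↔ toZMod a = toZMod b := by
  rw [← sub_eq_zero, ← map_sub, ← RingHom.mem_ker, ker_toZMod,
    maximalIdeal_eq_span_p, Ideal.mem_span_singleton]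

lemma isOpen_dvd_sub (n : ℕ) (a : ℤ_[p]) : IsOpen {x : ℤ_[p] | (p:ℤ_[p])^n ∣ x - a} := by
  have : {x : ℤ_[p] | (p:ℤ_[p])^n ∣ x - a} = Metric.ball a ((p:ℝ)^(-(n:ℤ)+1)) := by
    ext x
    simp only [Set.mem_setOf_eq, Metric.mem_ball, dist_eq_norm,
      ← norm_le_pow_iff_norm_lt_pow_add_one, PadicInt.norm_le_pow_iff_mem_span_pow,
      Ideal.mem_span_singleton]
  rw [this]; exact Metric.isOpen_ball

lemma isLocallyConstant_toZModPow (n : ℕ) :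
    IsLocallyConstant (fun x : ℤ_[p] => toZModPow n x) := by
  rw [IsLocallyConstant.iff_isOpen_fiber_apply]
  intro a
  have : (fun x : ℤ_[p] => toZModPow n x) ⁻¹' {toZModPow n a}
      = {x : ℤ_[p] | (p:ℤ_[p])^n ∣ x - a} := by
    ext x
    simp [Set.mem_setOf_eq, dvd_iff_toZModPow_eq]
  rw [this]; exact isOpen_dvd_sub n a

lemma isLocallyConstant_toZMod :
    IsLocallyConstant (fun x : ℤ_[p] => toZMod x) := by
  rw [IsLocallyConstant.iff_isOpen_fiber_apply]
  intro a
  have : (fun x : ℤ_[p] => toZMod x) ⁻¹' {toZMod a}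
      = {x : ℤ_[p] | (p:ℤ_[p])^1 ∣ x - a} := by
    ext x
    simp [Set.mem_setOf_eq, dvd_iff_toZMod_eq]
  rw [this]; exact isOpen_dvd_sub 1 a


variable {G : Type} [Group G] [TopologicalSpace G] {χ : G →* ℤ_[p]ˣ}


lemma liftExact (hcyc : IsCyclotomicPairInf p G χ) (Q : Subgroup G) (hQ : IsOpen (Q : Set G))
    (n : ℕ) (α : Q → ℤ_[p])
    (hcoc : ∀ g h : Q, (p:ℤ_[p])^n ∣ α (g*h) - (α g + (χ (g:G) : ℤ_[p]) * α h))
    (hlc : IsLocallyConstant (fun q => toZModPow n (α q))) :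
    ∃ B : Q → ℤ_[p], Continuous B ∧ (∀ g h : Q, B (g*h) = B g + (χ (g:G):ℤ_[p]) * B h) ∧
      ∀ q, (p:ℤ_[p])^n ∣ α q - B q := by
  induction n generalizing α with
  | zero => exact ⟨0, continuous_const, by simp, fun q => by simpa using one_dvd _⟩
  | succ n IH =>
    haveI : NeZero p := ⟨(Fact.out : p.Prime).ne_zero⟩
    have hp0 : (p : ℤ_[p]) ≠ 0 := Nat.cast_ne_zero.2 (Fact.out : p.Prime).ne_zero
    -- the mod p cocycle
    have hcoc1 : ∀ g h : Q, toZMod (α (g*h)) =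
        toZMod (α g) + toZMod (χ (g:G) : ℤ_[p]) * toZMod (α h) := by
      intro g h
      have : (p:ℤ_[p]) ∣ α (g*h) - (α g + (χ (g:G):ℤ_[p]) * α h) :=
        dvd_trans (dvd_pow_self _ (Nat.succ_ne_zero n)) (hcoc g h)
      have := (dvd_iff_toZMod_eq _ _).1 this
      simpa [map_add, map_mul] using this
    have hlc1 : IsLocallyConstant (fun q => toZMod (α q)) := by
      rw [IsLocallyConstant.iff_exists_open]
      intro q
      obtain ⟨U, hU, hqU, hUc⟩ := (IsLocallyConstant.iff_exists_open _).1 hlc q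
      refine ⟨U, hU, hqU, fun q' hq' => ?_⟩
      have : (p:ℤ_[p])^(n+1) ∣ α q' - α q := (dvd_iff_toZModPow_eq _ _ _).2 (hUc q' hq')
      exact (dvd_iff_toZMod_eq _ _).1
        (dvd_trans (dvd_pow_self _ (Nat.succ_ne_zero n)) this)
    obtain ⟨Z₁, m, hZc, hZcoc, hZred⟩ := hcyc.2 Q hQ _ hlc1 hcoc1
    set B₁ : Q → ℤ_[p] := fun q => Z₁ q - ((χ (q:G) : ℤ_[p]) - 1) * ((m.val : ℕ) : ℤ_[p])
      with hB₁def
    have hB₁cont : Continuous B₁ := by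
      apply hZc.sub
      exact (((hcyc.1.comp continuous_subtype_val).sub continuous_const).mul continuous_const)
    have hB₁coc : ∀ g h : Q, B₁ (g*h) = B₁ g + (χ (g:G):ℤ_[p]) * B₁ h := by
      intro g h
      simp only [hB₁def]
      rw [hZcoc g h]
      push_cast [map_mul]
      ring
    have hB₁red : ∀ q, toZMod (B₁ q) = toZMod (α q) := by
      intro q
      have hm : toZMod ((m.val : ℕ) : ℤ_[p]) = m := by
        rw [map_natCast]
        exact ZMod.natCast_rightInverse m
      simp only [hB₁def, map_sub, map_mul, map_one, hZred q, hm]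
      ring
    have hB₁dvd : ∀ q, (p:ℤ_[p]) ∣ α q - B₁ q :=
      fun q => (dvd_iff_toZMod_eq _ _).2 (hB₁red q).symm
    set α₁ : Q → ℤ_[p] := fun q => (hB₁dvd q).choose with hα₁def
    have hα₁ : ∀ q, α q - B₁ q = p * α₁ q := fun q => (hB₁dvd q).choose_spec
    have key : ∀ g h : Q, α (g*h) - (α g + (χ (g:G):ℤ_[p]) * α h)
        = p * (α₁ (g*h) - (α₁ g + (χ (g:G):ℤ_[p]) * α₁ h))
          + (B₁ (g*h) - (B₁ g + (χ (g:G):ℤ_[p]) * B₁ h)) := by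
      intro g h
      linear_combination hα₁ (g*h) - hα₁ g - (χ (g:G):ℤ_[p]) * hα₁ h
    have hside1 : ∀ g h : Q, (p:ℤ_[p])^n ∣ α₁ (g*h) - (α₁ g + (χ (g:G):ℤ_[p]) * α₁ h) := by
      intro g h
      have h1 : (p:ℤ_[p])^(n+1) ∣ p * (α₁ (g*h) - (α₁ g + (χ (g:G):ℤ_[p]) * α₁ h)) := by
        have h5 := hcoc g h
        rw [key g h] at h5
        have hz : B₁ (g*h) - (B₁ g + (χ (g:G):ℤ_[p]) * B₁ h) = 0 := by
          rw [hB₁coc g h]; ring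
        rwa [hz, add_zero] at h5
      rw [pow_succ'] at h1
      exact (mul_dvd_mul_iff_left hp0).1 h1
    have hside2 : IsLocallyConstant (fun q => toZModPow n (α₁ q)) := by
      rw [IsLocallyConstant.iff_exists_open]
      intro q
      obtain ⟨U, hU, hqU, hUc⟩ := (IsLocallyConstant.iff_exists_open _).1 hlc q
      refine ⟨U ∩ B₁ ⁻¹' {x | (p:ℤ_[p])^(n+1) ∣ x - B₁ q},
        hU.inter ((isOpen_dvd_sub (n+1) (B₁ q)).preimage hB₁cont),
        ⟨hqU, by simp⟩, fun q' hq' => ?_⟩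
      have h1 : (p:ℤ_[p])^(n+1) ∣ α q' - α q := (dvd_iff_toZModPow_eq _ _ _).2 (hUc q' hq'.1)
      have h2 : (p:ℤ_[p])^(n+1) ∣ B₁ q' - B₁ q := hq'.2
      have h3 : (p:ℤ_[p])^(n+1) ∣ p * (α₁ q' - α₁ q) := by
        have h6 : p * (α₁ q' - α₁ q) = (α q' - α q) - (B₁ q' - B₁ q) := by
          linear_combination hα₁ q - hα₁ q'
        rw [h6]; exact dvd_sub h1 h2
      rw [pow_succ'] at h3
      exact (dvd_iff_toZModPow_eq _ _ _).1 ((mul_dvd_mul_iff_left hp0).1 h3)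
    obtain ⟨Bn, hBnc, hBncoc, hBndvd⟩ := IH α₁ hside1 hside2
    refine ⟨fun q => B₁ q + p * Bn q, hB₁cont.add (continuous_const.mul hBnc), ?_, ?_⟩
    · intro g h
      simp only [hB₁coc g h, hBncoc g h]; ring
    · intro q
      have h4 : α q - (B₁ q + p * Bn q) = p * (α₁ q - Bn q) := by
        linear_combination hα₁ q
      rw [h4, pow_succ']
      exact mul_dvd_mul_left _ (hBndvd q)

section LaurentAux

variable (p : ℕ) [Fact p.Prime] (G : Type) [Group G] (χ : G →* ℤ_[p]ˣ)

/-- Projection to `G` as a monoid hom. -/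
def prHom : Laurent p G χ →* G where
  toFun := Laurent.g
  map_one' := rfl
  map_mul' _ _ := rfl

variable [TopologicalSpace G]

lemma cont_pair : Continuous (fun a : Laurent p G χ => (a.x, a.g)) :=
  continuous_induced_dom

lemma cont_x : Continuous (fun a : Laurent p G χ => a.x) :=
  continuous_fst.comp (cont_pair p G χ)

lemma cont_g : Continuous (fun a : Laurent p G χ => a.g) :=
  continuous_snd.comp (cont_pair p G χ)

variable {p G χ}

lemma mk_one_mul (a b : ℤ_[p]) :
    (⟨a, 1⟩ : Laurent p G χ) * ⟨b, 1⟩ = ⟨a + b, 1⟩ := by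
  ext <;> simp

lemma mk_one_pow (a : ℤ_[p]) (n : ℕ) :
    (⟨a, 1⟩ : Laurent p G χ) ^ n = ⟨(n : ℤ_[p]) * a, 1⟩ := by
  induction n with
  | zero => ext <;> simp [pow_zero]
  | succ n ih =>
      rw [pow_succ, ih, mk_one_mul]
      ext <;> simp <;> push_cast <;> ring

end LaurentAux

end CycAux

/-- Proposition 7.2 of the paper.
If `(G, χ)` is a `(1,∞)`-cyclotomic pair (`G` profinite), then its Laurent extension
`(G((t)), χ̂)` is again a `(1,∞)`-cyclotomic pair. -/
theorem laurent_extension_is_cyclotomic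
    (p : ℕ) [Fact p.Prime] (G : Type) [Group G] [TopologicalSpace G]
    [IsTopologicalGroup G] [CompactSpace G] [TotallyDisconnectedSpace G] [T2Space G]
    (χ : G →* ℤ_[p]ˣ) (hcyc : IsCyclotomicPairInf p G χ) :
    IsCyclotomicPairInf p (Laurent p G χ) (Laurent.chiHat p G χ) := by
  classical
  haveI : NeZero p := ⟨(Fact.out : p.Prime).ne_zero⟩
  constructor
  · exact hcyc.1.comp (CycAux.cont_g p G χ)
  intro H hH z hzlc hzcoc
  -- Step 1: a basic open neighborhood inside H
  obtain ⟨V, hVopen, hVeq⟩ := isOpen_induced_iff.mp hH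
  have hmem : ∀ a : Laurent p G χ, a ∈ H ↔ (a.x, a.g) ∈ V :=
    fun a => (Set.ext_iff.mp hVeq a).symm
  have h01V : ((0 : ℤ_[p]), (1 : G)) ∈ V := (hmem 1).1 H.one_mem
  obtain ⟨u, U, hu, hU, h0u, h1U, huv⟩ := isOpen_prod_iff.mp hVopen 0 1 h01V
  obtain ⟨ε, hε, hball⟩ := Metric.isOpen_iff.mp hu 0 h0u
  have hp1 : (1:ℝ) < (p:ℝ) := by exact_mod_cast (Fact.out : p.Prime).one_lt
  obtain ⟨k, hk_lt⟩ := exists_pow_lt_of_lt_one hε (by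
    rw [inv_lt_one_iff₀]; right; exact hp1)
  have hk : ∀ (x : ℤ_[p]) (g : G), (p:ℤ_[p])^k ∣ x → g ∈ U → (⟨x, g⟩ : Laurent p G χ) ∈ H := by
    intro x g hx hg
    have hxu : x ∈ u := by
      apply hball
      have h1 : ‖x‖ ≤ (p:ℝ)^(-(k:ℤ)) := by
        rw [PadicInt.norm_le_pow_iff_mem_span_pow, Ideal.mem_span_singleton]
        exact hx
      have h2 : ((p:ℝ))^(-(k:ℤ)) = ((p:ℝ))⁻¹^k := by
        rw [inv_pow, ← zpow_natCast, ← zpow_neg]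
      simp only [Metric.mem_ball, dist_zero_right]
      calc ‖x‖ ≤ ((p:ℝ))⁻¹^k := by rw [← h2]; exact h1
        _ < ε := hk_lt
    exact (hmem _).2 (huv (Set.mk_mem_prod hxu hg))
  -- Step 2: the subgroup H ∩ (ℤ_p × 1) is exactly p^j ℤ_p
  set S : Set ℕ := {n : ℕ | ∀ x : ℤ_[p], (⟨x, 1⟩ : Laurent p G χ) ∈ H → (p:ℤ_[p])^n ∣ x}
    with hSdef
  have hS0 : 0 ∈ S := fun x _ => by simpa using one_dvd x
  have hSk : ∀ n ∈ S, n ≤ k := by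
    intro n hn
    have hpk : (⟨(p:ℤ_[p])^k, 1⟩ : Laurent p G χ) ∈ H := hk _ 1 dvd_rfl h1U
    have hdvd : (p:ℤ_[p])^n ∣ (p:ℤ_[p])^k := hn _ hpk
    have hinv : (p:ℝ)⁻¹ < 1 := by rw [inv_lt_one_iff₀]; right; exact hp1
    have hpu : ¬IsUnit (p:ℤ_[p]) := by
      rw [PadicInt.isUnit_iff, PadicInt.norm_p]
      intro hc; rw [hc] at hinv; linarith
    have hp0 : (p:ℤ_[p]) ≠ 0 := Nat.cast_ne_zero.2 (Fact.out : p.Prime).ne_zero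
    exact (pow_dvd_pow_iff hp0 hpu).mp hdvd
  set j : ℕ := Nat.findGreatest (· ∈ S) k with hjdef
  have hj2 : ∀ x : ℤ_[p], (⟨x, 1⟩ : Laurent p G χ) ∈ H → (p:ℤ_[p])^j ∣ x :=
    Nat.findGreatest_spec (Nat.zero_le k) hS0
  have hjsucc : ¬ (j + 1 ∈ S) := by
    intro hmem1
    have hle : j + 1 ≤ k := hSk _ hmem1
    exact Nat.findGreatest_is_greatest (Nat.lt_succ_self j) hle hmem1
  have hexa : ∃ a : ℤ_[p], (⟨a, 1⟩ : Laurent p G χ) ∈ H ∧ ¬ (p:ℤ_[p])^(j+1) ∣ a := by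
    by_contra hcon
    push_neg at hcon
    exact hjsucc (fun x hx => hcon x hx)
  obtain ⟨a, haH, hand⟩ := hexa
  have hp0 : (p:ℤ_[p]) ≠ 0 := Nat.cast_ne_zero.2 (Fact.out : p.Prime).ne_zero
  have hj1 : ∀ x : ℤ_[p], (p:ℤ_[p])^j ∣ x → (⟨x, 1⟩ : Laurent p G χ) ∈ H := by
    obtain ⟨u0, hu0⟩ := hj2 a haH
    have hu0unit : IsUnit u0 := by
      rw [PadicInt.isUnit_iff]
      rcases lt_or_eq_of_le (PadicInt.norm_le_one u0) with hlt | heq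
      · exfalso
        apply hand
        rw [PadicInt.norm_lt_one_iff_dvd] at hlt
        obtain ⟨w, hw⟩ := hlt
        exact ⟨w, by rw [hu0, hw, pow_succ]; ring⟩
      · exact heq
    intro x hx
    obtain ⟨t, ht⟩ := hx
    set uu := hu0unit.unit with huudef
    have huu : (uu : ℤ_[p]) = u0 := rfl
    set s : ℤ_[p] := ((uu⁻¹ : ℤ_[p]ˣ) : ℤ_[p]) * t with hsdef
    have has : a * s = x := by
      rw [ht, hu0, hsdef]
      have : u0 * ((uu⁻¹ : ℤ_[p]ˣ) : ℤ_[p]) = 1 := by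
        rw [← huu]; exact uu.mul_inv
      calc (p:ℤ_[p])^j * u0 * (((uu⁻¹ : ℤ_[p]ˣ) : ℤ_[p]) * t)
          = (p:ℤ_[p])^j * (u0 * ((uu⁻¹ : ℤ_[p]ˣ) : ℤ_[p])) * t := by ring
        _ = (p:ℤ_[p])^j * t := by rw [this]; ring
    set n : ℕ := s.appr k with hndef
    have hsn : (p:ℤ_[p])^k ∣ s - n := by
      rw [← Ideal.mem_span_singleton]
      exact s.appr_spec k
    have h1 : (⟨a * n, 1⟩ : Laurent p G χ) ∈ H := by
      have : (⟨a * n, 1⟩ : Laurent p G χ) = (⟨a, 1⟩ : Laurent p G χ) ^ n := by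
        rw [CycAux.mk_one_pow]
        ext <;> simp [mul_comm]
      rw [this]
      exact pow_mem haH n
    have h2 : (⟨a * (s - n), 1⟩ : Laurent p G χ) ∈ H :=
      hk _ 1 (Dvd.dvd.mul_left hsn a) h1U
    have h3 := H.mul_mem h1 h2
    rw [CycAux.mk_one_mul] at h3
    have : a * n + a * (s - n) = x := by rw [← has]; ring
    rwa [this] at h3
  -- Step 3: image subgroup in G
  set Q : Subgroup G := Subgroup.map (CycAux.prHom p G χ) H with hQdef
  have hQmem : ∀ g : G, g ∈ Q ↔ ∃ h : Laurent p G χ, h ∈ H ∧ h.g = g := by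
    intro g
    rw [hQdef, Subgroup.mem_map]
    constructor
    · rintro ⟨h, hh, rfl⟩; exact ⟨h, hh, rfl⟩
    · rintro ⟨h, hh, rfl⟩; exact ⟨h, hh, rfl⟩
  have hQopen : IsOpen (Q : Set G) := by
    apply Subgroup.isOpen_of_mem_nhds
    apply Filter.mem_of_superset (hU.mem_nhds h1U)
    intro g hg
    exact (hQmem g).2 ⟨⟨0, g⟩, hk 0 g (dvd_zero _) hg, rfl⟩
  -- Step 4: a section of the projection and the resulting `mod p^j` cocycle
  have hsec_ex : ∀ q : Q, ∃ h : Laurent p G χ, h ∈ H ∧ h.g = (q : G) :=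
    fun q => (hQmem q).1 q.2
  choose sec hsecH hsecg using hsec_ex
  set α : Q → ℤ_[p] := fun q => (sec q).x with hαdef
  -- key difference lemma
  have hdiff : ∀ h h' : Laurent p G χ, h ∈ H → h' ∈ H → h.g = h'.g →
      (p:ℤ_[p])^j ∣ h.x - h'.x := by
    intro h h' hh hh' hgg
    have hmul : h * h'⁻¹ = (⟨h.x - h'.x, 1⟩ : Laurent p G χ) := by
      ext
      · simp only [Laurent.mul_x, Laurent.inv_x, Laurent.inv_g, hgg]
        have : ((χ h'.g : ℤ_[p])) * (((χ h'.g)⁻¹ : ℤ_[p]ˣ) : ℤ_[p]) = 1 := by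
          rw [← Units.val_mul, mul_inv_cancel, Units.val_one]
        calc h.x + (χ h'.g : ℤ_[p]) * -((((χ h'.g)⁻¹ : ℤ_[p]ˣ) : ℤ_[p]) * h'.x)
            = h.x - ((χ h'.g : ℤ_[p]) * (((χ h'.g)⁻¹ : ℤ_[p]ˣ) : ℤ_[p])) * h'.x := by ring
          _ = h.x - h'.x := by rw [this]; ring
      · simp [hgg]
    have := H.mul_mem hh (H.inv_mem hh')
    rw [hmul] at this
    exact hj2 _ this
  have hαcoc : ∀ q q' : Q, (p:ℤ_[p])^j ∣ α (q * q') - (α q + (χ (q:G) : ℤ_[p]) * α q') := by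
    intro q q'
    have hprod : sec q * sec q' ∈ H := H.mul_mem (hsecH q) (hsecH q')
    have hgeq : (sec (q * q')).g = (sec q * sec q').g := by
      rw [hsecg, Laurent.mul_g, hsecg, hsecg]
      rfl
    have := hdiff _ _ (hsecH (q * q')) hprod hgeq
    simpa [hαdef, Laurent.mul_x, hsecg] using this
  have hαlc : IsLocallyConstant (fun q : Q => PadicInt.toZModPow j (α q)) := by
    rw [IsLocallyConstant.iff_exists_open]
    intro q
    refine ⟨{q' : Q | (q' : G) ∈ (fun v => (q : G) * v) '' U}, ?_, ?_, ?_⟩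
    · exact ((Homeomorph.mulLeft (q:G)).isOpenMap U hU).preimage continuous_subtype_val
    · exact ⟨1, h1U, mul_one _⟩
    · rintro q' ⟨v, hvU, hvq⟩
      have h0 : sec q * (⟨0, v⟩ : Laurent p G χ) ∈ H :=
        H.mul_mem (hsecH q) (hk 0 v (dvd_zero _) hvU)
      have hg0 : (sec q' ).g = (sec q * (⟨0, v⟩ : Laurent p G χ)).g := by
        rw [hsecg, Laurent.mul_g, hsecg]
        exact hvq.symm
      have hd := hdiff _ _ (hsecH q') h0 hg0
      have hx0 : (sec q * (⟨0, v⟩ : Laurent p G χ)).x = α q := by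
        simp [hαdef]
      rw [hx0] at hd
      exact (CycAux.dvd_iff_toZModPow_eq j _ _).1 hd
  -- Step 5: exact lift of α
  obtain ⟨B, hBc, hBcoc, hBdvd⟩ := CycAux.liftExact hcyc Q hQopen j α hαcoc hαlc
  -- Step 6: the integral cocycle Y on H
  set prQ : H → Q := fun h => ⟨(h : Laurent p G χ).g,
    (hQmem _).2 ⟨(h : Laurent p G χ), h.2, rfl⟩⟩ with hprQdef
  have hprQcont : Continuous prQ :=
    ((CycAux.cont_g p G χ).comp continuous_subtype_val).subtype_mk _
  have hprQmul : ∀ g h : H, prQ (g * h) = prQ g * prQ h := by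
    intro g h
    apply Subtype.ext
    rfl
  set F : H → ℤ_[p] := fun h => (h : Laurent p G χ).x - B (prQ h) with hFdef
  have hFcont : Continuous F :=
    ((CycAux.cont_x p G χ).comp continuous_subtype_val).sub (hBc.comp hprQcont)
  have hFdvd : ∀ h : H, ∃ t : ℤ_[p], F h = (p:ℤ_[p])^j * t := by
    intro h
    have h1 : (p:ℤ_[p])^j ∣ (h : Laurent p G χ).x - α (prQ h) := by
      apply hdiff _ _ h.2 (hsecH (prQ h))
      rw [hsecg]
    have h2 : (p:ℤ_[p])^j ∣ α (prQ h) - B (prQ h) := hBdvd (prQ h)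
    obtain ⟨t, ht⟩ := dvd_add h1 h2
    exact ⟨t, by rw [hFdef]; simp only; rw [← ht]; ring⟩
  choose Y hYspec using hFdvd
  have hpj0 : ((p:ℤ_[p])^j) ≠ 0 := pow_ne_zero _ hp0
  have hYcoc : ∀ g h : H, Y (g * h) = Y g + (χ ((g:Laurent p G χ).g) : ℤ_[p]) * Y h := by
    intro g h
    apply mul_left_cancel₀ hpj0
    have e1 := hYspec (g * h)
    have e2 := hYspec g
    have e3 := hYspec h
    rw [hFdef] at e1 e2 e3
    simp only at e1 e2 e3
    rw [hprQmul g h] at e1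
    have hBm := hBcoc (prQ g) (prQ h)
    have hx : ((g * h : H) : Laurent p G χ).x
        = (g : Laurent p G χ).x + (χ ((g:Laurent p G χ).g) : ℤ_[p]) * (h : Laurent p G χ).x := rfl
    have hχ : (χ ((prQ g : Q) : G) : ℤ_[p]) = (χ ((g:Laurent p G χ).g) : ℤ_[p]) := rfl
    rw [hχ] at hBm
    calc (p:ℤ_[p])^j * Y (g * h)
        = ((g * h : H) : Laurent p G χ).x - B (prQ g * prQ h) := e1.symm
      _ = (g : Laurent p G χ).x + (χ ((g:Laurent p G χ).g) : ℤ_[p]) * (h : Laurent p G χ).x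
          - (B (prQ g) + (χ ((g:Laurent p G χ).g) : ℤ_[p]) * B (prQ h)) := by rw [hx, hBm]
      _ = ((g : Laurent p G χ).x - B (prQ g))
          + (χ ((g:Laurent p G χ).g) : ℤ_[p]) * ((h : Laurent p G χ).x - B (prQ h)) := by ring
      _ = (p:ℤ_[p])^j * Y g + (χ ((g:Laurent p G χ).g) : ℤ_[p]) * ((p:ℤ_[p])^j * Y h) := by
          rw [← e2, ← e3]
      _ = (p:ℤ_[p])^j * (Y g + (χ ((g:Laurent p G χ).g) : ℤ_[p]) * Y h) := by ring
  have hYcont : Continuous Y := by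
    rw [continuous_iff_continuousAt]
    intro b
    have hpj : (0:ℝ) < (p:ℝ)^j := by positivity
    have hFb : Filter.Tendsto F (nhds b) (nhds (F b)) := hFcont.continuousAt
    rw [Metric.tendsto_nhds] at hFb
    unfold ContinuousAt
    rw [Metric.tendsto_nhds]
    intro ε hε
    filter_upwards [hFb (ε / (p:ℝ)^j) (div_pos hε hpj)] with a ha
    have hdist : dist (F a) (F b) = (p:ℝ)^(-(j:ℤ)) * dist (Y a) (Y b) := by
      rw [dist_eq_norm, dist_eq_norm, hYspec a, hYspec b, ← mul_sub,
        norm_mul, PadicInt.norm_p_pow]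
    rw [hdist] at ha
    have hscale : (p:ℝ)^(-(j:ℤ)) = ((p:ℝ)^j)⁻¹ := by
      rw [zpow_neg, zpow_natCast]
    rw [hscale] at ha
    calc dist (Y a) (Y b) = (p:ℝ)^j * (((p:ℝ)^j)⁻¹ * dist (Y a) (Y b)) := by
          field_simp
      _ < (p:ℝ)^j * (ε / (p:ℝ)^j) := by
          exact mul_lt_mul_of_pos_left ha hpj
      _ = ε := by field_simp
  -- Step 7: z restricted to p^j ℤ_p is t ↦ toZMod t * c
  have hmemA : ∀ t : ℤ_[p], (⟨(p:ℤ_[p])^j * t, 1⟩ : Laurent p G χ) ∈ H :=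
    fun t => hj1 _ ⟨t, rfl⟩
  set ι : ℤ_[p] → H := fun t => ⟨⟨(p:ℤ_[p])^j * t, 1⟩, hmemA t⟩ with hιdef
  have hιcont : Continuous ι := by
    apply Continuous.subtype_mk
    apply continuous_induced_rng.mpr
    exact ((continuous_const.mul continuous_id).prodMk continuous_const)
  have hι1 : ι 0 = 1 := by
    apply Subtype.ext
    ext <;> simp [hιdef]
  have hιadd : ∀ t s : ℤ_[p], ι (t + s) = ι t * ι s := by
    intro t s
    apply Subtype.ext
    show (⟨(p:ℤ_[p])^j * (t + s), 1⟩ : Laurent p G χ)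
      = (⟨(p:ℤ_[p])^j * t, 1⟩ : Laurent p G χ) * ⟨(p:ℤ_[p])^j * s, 1⟩
    rw [CycAux.mk_one_mul]
    ext <;> simp [mul_add]
  have hχ1 : ∀ t : ℤ_[p],
      PadicInt.toZMod ((Laurent.chiHat p G χ) ((ι t : H) : Laurent p G χ) : ℤ_[p]) = 1 := by
    intro t
    have : (Laurent.chiHat p G χ) ((ι t : H) : Laurent p G χ) = χ 1 := rfl
    rw [this, map_one, Units.val_one, map_one]
  have hz1 : z 1 = 0 := by
    have := hzcoc 1 1
    rw [mul_one] at this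
    have h1 : PadicInt.toZMod ((Laurent.chiHat p G χ) ((1 : H) : Laurent p G χ) : ℤ_[p]) = 1 := by
      rw [OneMemClass.coe_one, map_one, Units.val_one, map_one]
    rw [h1, one_mul] at this
    exact left_eq_add.mp this
  set c : ZMod p := z (ι 1) with hcdef
  set f : ℤ_[p] → ZMod p := fun t => z (ι t) - PadicInt.toZMod t * c with hfdef
  have hfadd : ∀ t s : ℤ_[p], f (t + s) = f t + f s := by
    intro t s
    rw [hfdef]
    simp only
    rw [hιadd, hzcoc (ι t) (ι s), hχ1, one_mul, map_add]
    ring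
  have hf1 : f 1 = 0 := by
    rw [hfdef]; simp only
    rw [map_one, one_mul, hcdef]
    ring
  have hf0 : f 0 = 0 := by
    have := hfadd 0 0
    rw [add_zero] at this
    exact left_eq_add.mp this
  have hfnat : ∀ n : ℕ, f (n : ℤ_[p]) = 0 := by
    intro n
    induction n with
    | zero => simpa using hf0
    | succ n ih =>
        push_cast
        rw [hfadd, ih, hf1, add_zero]
  have hflc : IsLocallyConstant f := by
    rw [hfdef]
    exact IsLocallyConstant.comp₂ (hzlc.comp_continuous hιcont)
      ((CycAux.isLocallyConstant_toZMod).comp (· * c)) (· - ·)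
  have hf : ∀ t : ℤ_[p], f t = 0 := by
    by_contra hcon
    push_neg at hcon
    obtain ⟨t, ht⟩ := hcon
    obtain ⟨nn, hnn⟩ := PadicInt.denseRange_natCast.exists_mem_open
      (hflc.isOpen_fiber (f t)) ⟨t, rfl⟩
    have h5 := hfnat nn
    rw [hnn] at h5
    exact ht h5
  have hzA : ∀ t : ℤ_[p], z (ι t) = PadicInt.toZMod t * c := by
    intro t
    have := hf t
    rw [hfdef] at this
    simp only at this
    exact sub_eq_zero.mp this
  -- Step 8: subtract the standard cocycle
  set z₀ : H → ZMod p := fun h => z h - PadicInt.toZMod (Y h) * c with hz₀def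
  have hχval : ∀ h : H, ((Laurent.chiHat p G χ) ((h : H) : Laurent p G χ) : ℤ_[p])
      = (χ ((h : Laurent p G χ).g) : ℤ_[p]) := fun h => rfl
  have hz₀coc : ∀ g h : H, z₀ (g * h) = z₀ g
      + PadicInt.toZMod (χ ((g : Laurent p G χ).g) : ℤ_[p]) * z₀ h := by
    intro g h
    rw [hz₀def]
    simp only
    rw [hzcoc g h, hYcoc g h, hχval, map_add, map_mul]
    ring
  have hz₀lc : IsLocallyConstant z₀ := by
    rw [hz₀def]
    exact IsLocallyConstant.comp₂ hzlc
      (((CycAux.isLocallyConstant_toZMod).comp_continuous hYcont).comp (· * c)) (· - ·)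
  have hB1 : B 1 = 0 := by
    have := hBcoc 1 1
    rw [mul_one, OneMemClass.coe_one, map_one, Units.val_one, one_mul] at this
    exact left_eq_add.mp this
  have hz₀A : ∀ h : H, (h : Laurent p G χ).g = 1 → z₀ h = 0 := by
    intro h hg1
    obtain ⟨t, ht⟩ := hj2 (h : Laurent p G χ).x (by
      have : (⟨(h : Laurent p G χ).x, 1⟩ : Laurent p G χ) = (h : Laurent p G χ) := by
        ext
        · rfl
        · exact hg1.symm
      rw [this]
      exact h.2)
    have hhι : h = ι t := by
      apply Subtype.ext
      ext
      · exact ht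
      · exact hg1
    have hprQ1 : prQ h = 1 := by
      apply Subtype.ext
      exact hg1
    have hYh : Y h = t := by
      apply mul_left_cancel₀ hpj0
      rw [← hYspec h, hFdef]
      simp only
      rw [hprQ1, hB1, sub_zero, ht]
    rw [hz₀def]
    simp only
    rw [hhι, hzA t, ← hhι, hYh]
    ring
  have hF1 : ∀ g h : H, (g : Laurent p G χ).g = (h : Laurent p G χ).g → z₀ g = z₀ h := by
    intro g h hgh
    have hd : ((g * h⁻¹ : H) : Laurent p G χ).g = 1 := by
      show (g : Laurent p G χ).g * ((h : Laurent p G χ).g)⁻¹ = 1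
      rw [hgh, mul_inv_cancel]
    have h0 : z₀ (g * h⁻¹) = 0 := hz₀A _ hd
    have hcomb := hz₀coc (g * h⁻¹) h
    rw [inv_mul_cancel_right, h0, hd, map_one, Units.val_one, map_one, one_mul, zero_add] at hcomb
    exact hcomb
  -- Step 9: the descended cocycle on Q
  set w : Q → ZMod p := fun q => z₀ ⟨sec q, hsecH q⟩ with hwdef
  have hwz₀ : ∀ h : H, w (prQ h) = z₀ h := by
    intro h
    apply hF1
    rw [hsecg]
  have hwcoc : ∀ q q' : Q, w (q * q') = w q + PadicInt.toZMod (χ (q : G) : ℤ_[p]) * w q' := by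
    intro q q'
    have hmm : (⟨sec q, hsecH q⟩ : H) * ⟨sec q', hsecH q'⟩ ∈ ({(⟨sec q, hsecH q⟩ : H) * ⟨sec q', hsecH q'⟩} : Set H) := rfl
    have h1 : w (q * q') = z₀ ((⟨sec q, hsecH q⟩ : H) * ⟨sec q', hsecH q'⟩) := by
      apply hF1
      show (sec (q * q')).g = (sec q * sec q').g
      rw [hsecg, Laurent.mul_g, hsecg, hsecg]
      rfl
    rw [h1, hz₀coc]
    have hgq : ((⟨sec q, hsecH q⟩ : H) : Laurent p G χ).g = (q : G) := hsecg q
    rw [hgq]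
  -- the auxiliary locally constant map on U
  set θ : {v : G // v ∈ U} → H := fun v => ⟨⟨0, (v : G)⟩, hk 0 _ (dvd_zero _) v.2⟩ with hθdef
  have hθcont : Continuous θ := by
    apply Continuous.subtype_mk
    apply continuous_induced_rng.mpr
    exact (continuous_const.prodMk continuous_subtype_val)
  have hψlc : IsLocallyConstant (fun v => z₀ (θ v)) := hz₀lc.comp_continuous hθcont
  have hθ1 : ∀ (hmem1 : (1:G) ∈ U), θ ⟨1, hmem1⟩ = 1 := by
    intro hmem1
    apply Subtype.ext
    ext <;> rfl
  have hz₀1 : z₀ (1 : H) = 0 := hz₀A 1 rfl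
  have hwlc : IsLocallyConstant w := by
    rw [IsLocallyConstant.iff_exists_open]
    intro q
    set W₀ : Set G := Subtype.val '' ((fun v => z₀ (θ v)) ⁻¹' {0}) with hW₀def
    have hW₀open : IsOpen W₀ := hU.isOpenMap_subtype_val _ (hψlc.isOpen_fiber 0)
    have h1W₀ : (1:G) ∈ W₀ := ⟨⟨1, h1U⟩, by rw [Set.mem_preimage, hθ1 h1U]; exact hz₀1, rfl⟩
    refine ⟨{q' : Q | (q' : G) ∈ (fun v => (q : G) * v) '' W₀}, ?_, ?_, ?_⟩
    · exact ((Homeomorph.mulLeft (q:G)).isOpenMap W₀ hW₀open).preimage continuous_subtype_val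
    · exact ⟨1, h1W₀, mul_one _⟩
    · rintro q' ⟨v, hvW₀, hvq⟩
      obtain ⟨⟨v', hv'U⟩, hv'0, hv'val⟩ := hvW₀
      subst hv'val
      have hprod : sec q * (⟨0, v'⟩ : Laurent p G χ) ∈ H :=
        H.mul_mem (hsecH q) (hk 0 v' (dvd_zero _) hv'U)
      have heq : w q' = z₀ ((⟨sec q, hsecH q⟩ : H) * θ ⟨v', hv'U⟩) := by
        apply hF1
        show (sec q').g = (sec q * (⟨0, v'⟩ : Laurent p G χ)).g
        rw [hsecg, Laurent.mul_g, hsecg]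
        exact hvq.symm
      rw [heq, hz₀coc]
      have hgq : ((⟨sec q, hsecH q⟩ : H) : Laurent p G χ).g = (q : G) := hsecg q
      have hv'00 : z₀ (θ ⟨v', hv'U⟩) = 0 := hv'0
      rw [hgq, hv'00, mul_zero, add_zero]
  -- Step 10: lift w using the hypothesis on G
  obtain ⟨W, m, hWc, hWcoc, hWred⟩ := hcyc.2 Q hQopen w hwlc hwcoc
  -- Step 11: assemble the final cocycle
  refine ⟨fun h => ((c.val : ℕ) : ℤ_[p]) * Y h + W (prQ h), m, ?_, ?_, ?_⟩
  · exact (continuous_const.mul hYcont).add (hWc.comp hprQcont)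
  · intro g h
    simp only [hprQmul g h, hWcoc (prQ g) (prQ h), hYcoc g h]
    have hh : (χ ((prQ g : Q) : G) : ℤ_[p]) = ((Laurent.chiHat p G χ) ((g : H) : Laurent p G χ) : ℤ_[p]) := rfl
    rw [hh]
    ring
  · intro h
    have hcval : PadicInt.toZMod (((c.val : ℕ) : ℤ_[p])) = c := by
      rw [map_natCast]
      exact ZMod.natCast_rightInverse c
    have hwred := hWred (prQ h)
    rw [hwz₀ h] at hwred
    simp only [map_add, map_mul, hcval, hwred, hz₀def]
    have hh : PadicInt.toZMod (χ ((prQ h : Q) : G) : ℤ_[p])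
        = PadicInt.toZMod ((Laurent.chiHat p G χ) ((h : H) : Laurent p G χ) : ℤ_[p]) := rfl
    rw [hh]
    ring








end
end

section
/- Let G be a finite group acting by ring automorphisms on a reduced commutative ring A having only finitely many minimal prime ideals. Then there exists an element b ∈ A with g·b = b for all g ∈ G, such that b is not a zero divisor in A and the localization A_b = A[1/b] is isomorphic, as a ring, to a finite product of integral domains. (This is proved inside the paper's Lemma 9.2: via elements a_i chosen in the intersections of the minimal primes, the norm b = ∏_{g∈G} g·a is a G-invariant non-zerodivisor and the elements a_i/a become a complete system of orthogonal idempotents of A_b decomposing it into domains.) -/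
/-- Comap of a minimal prime under a ring isomorphism is a minimal prime. -/
lemma comap_mem_minimalPrimes_of_ringEquiv {A B : Type} [CommRing A] [CommRing B]
    (e : A ≃+* B) {p : Ideal B} (hp : p ∈ minimalPrimes B) :
    p.comap (e : A →+* B) ∈ minimalPrimes A := by
  haveI hpp : p.IsPrime := hp.1.1
  refine ⟨⟨Ideal.comap_isPrime _ p, bot_le⟩, ?_⟩
  rintro q ⟨hq, -⟩ hle
  haveI := hq
  have h1 : q.comap (e.symm : B →+* A) ≤ p := by
    have := Ideal.comap_mono (f := (e.symm : B →+* A)) hle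
    rwa [Ideal.comap_comap, show (e : A →+* B).comp (e.symm : B →+* A) = RingHom.id B by
      ext x; simp, Ideal.comap_id] at this
  have h2 : p ≤ q.comap (e.symm : B →+* A) :=
    hp.2 ⟨Ideal.comap_isPrime _ q, bot_le⟩ h1
  have := Ideal.comap_mono (f := (e : A →+* B)) h2
  rwa [Ideal.comap_comap, show (e.symm : B →+* A).comp (e : A →+* B) = RingHom.id A by
    ext x; simp, Ideal.comap_id] at this

/-- proved inside Lemma 9.2 of the paper.
If a finite group `G` acts by ring automorphisms on a reduced commutative ring `A` having
finitely many minimal primes, there is a `G`-invariant non-zerodivisor `b ∈ A` such that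
the localization `A_b` is isomorphic to a finite product of integral domains. -/
theorem exists_invariant_nzd_localization_product_of_domains
    (G A : Type) [Group G] [Finite G] [CommRing A] [IsReduced A]
    [MulSemiringAction G A] (hmin : (minimalPrimes A).Finite) :
    ∃ b : A, (∀ g : G, g • b = b) ∧ b ∈ nonZeroDivisors A ∧
      ∃ (n : ℕ) (D : Fin n → Type) (inst : ∀ i, CommRing (D i)),
        (∀ i, letI := inst i; IsDomain (D i)) ∧
        (letI := inst; Nonempty (Localization.Away b ≃+* ((i : Fin n) → D i))) := by
  classical
  haveI := Fintype.ofFinite G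
  haveI : Fintype (minimalPrimes A) := hmin.fintype
  set ι := (minimalPrimes A) with hι
  -- every minimal prime is prime
  have hprime : ∀ p : ι, (p : Ideal A).IsPrime := fun p => p.2.1.1
  -- the intersection of all minimal primes is ⊥
  have hsInf : sInf (minimalPrimes A) = ⊥ := by
    have h := Ideal.sInf_minimalPrimes (I := (⊥ : Ideal A))
    have h2 := nilradical_eq_zero A
    unfold nilradical at h2
    rw [Ideal.zero_eq_bot] at h2
    rw [h2] at h
    exact h
  have hmem_bot : ∀ y : A, (∀ p : ι, y ∈ (p : Ideal A)) → y = 0 := by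
    intro y hy
    have : y ∈ sInf (minimalPrimes A) := Ideal.mem_sInf.2 fun {p} hp => hy ⟨p, hp⟩
    rw [hsInf] at this
    simpa using this
  -- elements not in any minimal prime are non-zerodivisors
  have hnzd : ∀ x : A, (∀ p : ι, x ∉ (p : Ideal A)) → x ∈ nonZeroDivisors A := by
    intro x hx
    refine mem_nonZeroDivisors_iff_right.2 fun y hy => hmem_bot y fun p => ?_
    have : y * x ∈ (p : Ideal A) := by rw [hy]; exact (p : Ideal A).zero_mem
    exact ((hprime p).mem_or_mem this).resolve_right (hx p)
  -- choose a p ∈ (⋂ q ≠ p) \ p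
  have hach : ∀ p : ι, ∃ x : A, x ∉ (p : Ideal A) ∧ ∀ q : ι, q ≠ p → x ∈ (q : Ideal A) := by
    intro p
    have hne : ¬ ((Finset.univ.erase p).inf (fun q : ι => (q : Ideal A)) ≤ (p : Ideal A)) := by
      intro hle
      obtain ⟨q, hq, hqle⟩ := ((hprime p).inf_le').1 hle
      have hqp : q ≠ p := Finset.ne_of_mem_erase hq
      have : (p : Ideal A) ≤ (q : Ideal A) := p.2.2 ⟨hprime q, bot_le⟩ hqle
      exact hqp (Subtype.ext (le_antisymm hqle this))
    obtain ⟨x, hx1, hx2⟩ := SetLike.not_le_iff_exists.1 hne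
    refine ⟨x, hx2, fun q hq => ?_⟩
    exact (Finset.inf_le (Finset.mem_erase.2 ⟨hq, Finset.mem_univ q⟩) : _ ≤ (q : Ideal A)) hx1
  choose a ha1 ha2 using hach
  -- c = ∑ a p is not in any minimal prime
  set c : A := ∑ p : ι, a p with hc
  have hcp : ∀ p : ι, c ∉ (p : Ideal A) := by
    intro p hmem
    have hsum : ∑ q ∈ Finset.univ.erase p, a q ∈ (p : Ideal A) :=
      Ideal.sum_mem _ fun q hq => ha2 q p (Finset.ne_of_mem_erase hq).symm
    have hdecomp : a p + ∑ q ∈ Finset.univ.erase p, a q = c :=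
      Finset.add_sum_erase _ _ (Finset.mem_univ p)
    have : a p ∈ (p : Ideal A) := by
      have := Ideal.sub_mem _ hmem hsum
      rwa [← hdecomp, add_sub_cancel_right] at this
    exact ha1 p this
  -- each g • c is not in any minimal prime
  have hgcp : ∀ g : G, ∀ p : ι, g • c ∉ (p : Ideal A) := by
    intro g p hmem
    set e := MulSemiringAction.toRingEquiv G A g with he
    have hq : (p : Ideal A).comap (e : A →+* A) ∈ minimalPrimes A :=
      comap_mem_minimalPrimes_of_ringEquiv e p.2
    have : c ∈ (p : Ideal A).comap (e : A →+* A) := by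
      exact hmem
    exact hcp ⟨_, hq⟩ this
  -- the invariant non-zerodivisor b
  set b : A := ∏ g : G, g • c with hb
  have hbp : ∀ p : ι, b ∉ (p : Ideal A) := by
    intro p hmem
    haveI := hprime p
    obtain ⟨g, -, hg⟩ := (Ideal.IsPrime.prod_mem_iff (hp := hprime p)).1 hmem
    exact hgcp g p hg
  have hbnzd : b ∈ nonZeroDivisors A := hnzd b (hbp)
  have hbinv : ∀ g : G, g • b = b := by
    intro g
    have h1 : g • b = ∏ h : G, (g * h) • c := by
      rw [hb]
      rw [show (g • ∏ h : G, h • c) = (MulSemiringAction.toRingEquiv G A g)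
        (∏ h : G, h • c) from rfl, map_prod]
      exact Finset.prod_congr rfl fun h _ => by
        show g • (h • c) = (g * h) • c
        rw [mul_smul]
    rw [h1]
    exact Fintype.prod_equiv (Equiv.mulLeft g) _ _ fun h => rfl
  refine ⟨b, hbinv, hbnzd, ?_⟩
  -- the localization
  set R := Localization.Away b with hR
  set f : A →+* R := algebraMap A R with hf
  set P : ι → Ideal R := fun p => (p : Ideal A).map f with hP
  -- b's powers avoid each minimal prime; P p is prime
  have hpow : ∀ p : ι, ∀ x ∈ Submonoid.powers b, x ∉ (p : Ideal A) := by
    rintro p x ⟨k, rfl⟩ hmem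
    exact hbp p ((hprime p).mem_of_pow_mem k hmem)
  haveI hPprime : ∀ p : ι, (P p).IsPrime := by
    intro p
    exact IsLocalization.isPrime_of_isPrime_disjoint (Submonoid.powers b) R (p : Ideal A)
      (hprime p) (Set.disjoint_left.2 fun {x} hx hx' => hpow p x hx hx')
  -- membership in P p pulls back
  have hpull : ∀ p : ι, ∀ y : A, f y ∈ P p → y ∈ (p : Ideal A) := by
    intro p y hy
    rw [hP] at hy
    obtain ⟨⟨w, t⟩, hwt⟩ := (IsLocalization.mem_map_algebraMap_iff (Submonoid.powers b) R).1 hy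
    rw [← map_mul] at hwt
    obtain ⟨t', ht'⟩ := (IsLocalization.eq_iff_exists (Submonoid.powers b) R).1 hwt
    have hmem : (t' : A) * ((t : A) * y) ∈ (p : Ideal A) := by
      have : (t' : A) * (w : A) ∈ (p : Ideal A) := Ideal.mul_mem_left _ _ w.2
      rw [← ht'] at this
      convert this using 1; ring
    rcases (hprime p).mem_or_mem hmem with h | h
    · exact absurd h (hpow p t' t'.2)
    · rcases (hprime p).mem_or_mem h with h | h
      · exact absurd h (hpow p t t.2)
      · exact h
  -- c is invertible in R
  have hcunit : IsUnit (f c) := by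
    obtain ⟨d, hd⟩ : c ∣ b := by
      have := Finset.dvd_prod_of_mem (fun g : G => g • c) (Finset.mem_univ (1 : G))
      simpa using this
    have hub : IsUnit (f b) := IsLocalization.map_units R (⟨b, Submonoid.mem_powers b⟩ :
      Submonoid.powers b)
    have h : f (c * d) = f c * f d := map_mul f c d
    rw [← hd] at h
    rw [h] at hub
    exact isUnit_of_mul_isUnit_left hub
  -- pairwise coprimality
  have hcop : Pairwise (Function.onFun IsCoprime P) := by
    intro p q hpq
    rw [Function.onFun, Ideal.isCoprime_iff_sup_eq]
    rw [eq_top_iff]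
    intro x _
    obtain ⟨u, hu⟩ := hcunit
    have h1 : f (a q) * ↑u⁻¹ ∈ P p :=
      Ideal.mul_mem_right _ _ (Ideal.mem_map_of_mem f (ha2 q p hpq))
    have h2 : (∑ k ∈ Finset.univ.erase q, f (a k)) * ↑u⁻¹ ∈ P q :=
      Ideal.mul_mem_right _ _ (Ideal.sum_mem _ fun k hk =>
        Ideal.mem_map_of_mem f (ha2 k q (Finset.ne_of_mem_erase hk).symm))
    have h3 : f (a q) * ↑u⁻¹ + (∑ k ∈ Finset.univ.erase q, f (a k)) * ↑u⁻¹ = 1 := by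
      have hsum : f (a q) + ∑ k ∈ Finset.univ.erase q, f (a k) = f c := by
        rw [← map_sum, ← map_add]
        exact congrArg f (Finset.add_sum_erase _ _ (Finset.mem_univ q))
      rw [← add_mul, hsum, ← hu, Units.mul_inv]
    have : (1 : R) ∈ P p ⊔ P q := by
      rw [← h3]; exact Submodule.add_mem_sup h1 h2
    simpa using Ideal.mul_mem_right x _ this
  -- the intersection of the P p is ⊥
  have hInf : (⨅ p : ι, P p) = ⊥ := by
    rw [eq_bot_iff]
    intro x hx
    obtain ⟨⟨y, s⟩, hys⟩ := IsLocalization.surj (Submonoid.powers b) x (S := R)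
    have hy : ∀ p : ι, y ∈ (p : Ideal A) := by
      intro p
      refine hpull p y ?_
      have hxp : x ∈ P p := Ideal.mem_iInf.1 hx p
      rw [← hys]
      exact Ideal.mul_mem_right _ _ hxp
    have : y = 0 := hmem_bot y hy
    rw [this, map_zero] at hys
    have hus : IsUnit (f s) := IsLocalization.map_units R s
    obtain ⟨u, hu⟩ := hus
    have : x = 0 := by
      have := congrArg (· * ((u⁻¹ : Rˣ) : R)) hys
      have hu' : (u : R) = algebraMap A R s := hu
      simpa [mul_assoc, ← hu', Units.mul_inv] using this
    simp [this]
  -- assemble the isomorphism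
  set n := Fintype.card ι with hn
  set e : Fin n ≃ ι := (Fintype.equivFin ι).symm with hee
  refine ⟨n, fun j => R ⧸ P (e j), fun j => inferInstance, fun j => inferInstance, ?_⟩
  have e1 : R ≃+* R ⧸ (⊥ : Ideal R) := (RingEquiv.quotientBot R).symm
  have e2 : R ⧸ (⊥ : Ideal R) ≃+* R ⧸ (⨅ p : ι, P p) := Ideal.quotEquivOfEq hInf.symm
  have e3 : (R ⧸ ⨅ p : ι, P p) ≃+* ∀ p : ι, R ⧸ P p :=
    Ideal.quotientInfRingEquivPiQuotient P hcop
  have e4 : (∀ p : ι, R ⧸ P p) ≃+* ∀ j : Fin n, R ⧸ P (e j) :=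
    (RingEquiv.piCongrLeft (fun p : ι => R ⧸ P p) e).symm
  exact ⟨((e1.trans e2).trans e3).trans e4⟩
end

section
/- Let G be a group, let A be a commutative ring on which G acts by ring automorphisms, and let M be an A-module equipped with an additive semilinear G-action (g·(a·m) = (g·a)·(g·m)). Let X be a nonempty set equipped with a G-action and with a simply transitive action of the additive group of M, written (m, x) ↦ m +ᵥ x, satisfying the compatibility g·(m +ᵥ x) = (g·m) +ᵥ (g·x) for all g ∈ G, m ∈ M, x ∈ X. Then there exist an A-module E with an additive semilinear G-action, an injective A-linear G-equivariant map i : M → E, and a surjective A-linear G-equivariant map π : E → A with ker(π) = im(i), together with a G-equivariant bijection θ : X → π⁻¹(1) satisfying θ(m +ᵥ x) = i(m) + θ(x) for all m ∈ M and x ∈ X. (This is the 'modulification' converse assertion of the paper's Lemma 4.11.) -/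
/-- The data of a "modulification" of a nonempty `G`-affine space `X` over `A` with
module of translations `M`: an exact sequence `0 → M →i→ E →π→ A → 0` of `(G,A)`-modules
together with a `G`-equivariant identification of `X` with `π⁻¹(1)` compatible with
translations. -/
structure ModulificationOf (G A M X : Type) [Group G] [CommRing A] [MulSemiringAction G A]
    [AddCommGroup M] [Module A M] [DistribMulAction G M]
    [MulAction G X] [AddAction M X] where
  E : Type
  [addCommGroupE : AddCommGroup E]
  [moduleE : Module A E]
  [gActionE : DistribMulAction G E]
  semilinear : ∀ (g : G) (a : A) (e : E), g • (a • e) = (g • a) • (g • e)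
  i : M →ₗ[A] E
  i_injective : Function.Injective i
  i_equivariant : ∀ (g : G) (m : M), i (g • m) = g • i m
  π : E →ₗ[A] A
  π_surjective : Function.Surjective π
  π_equivariant : ∀ (g : G) (e : E), π (g • e) = g • π e
  ker_eq_range : LinearMap.ker π = LinearMap.range i
  θ : X → E
  θ_mem : ∀ x : X, π (θ x) = 1
  θ_injective : Function.Injective θ
  θ_surjective : ∀ e : E, π e = 1 → ∃ x : X, θ x = e
  θ_equivariant : ∀ (g : G) (x : X), θ (g • x) = g • θ x
  θ_translation : ∀ (m : M) (x : X), θ (m +ᵥ x) = i m + θ x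

/-- The twisted `G`-action on `M × A` determined by a cocycle `c`. -/
noncomputable def twistedAction {G A M : Type} [Group G] [CommRing A] [MulSemiringAction G A]
    [AddCommGroup M] [Module A M] [DistribMulAction G M]
    (hM : ∀ (g : G) (a : A) (m : M), g • (a • m) = (g • a) • (g • m))
    (c : G → M) (hc1 : c 1 = 0)
    (hcmul : ∀ g h : G, c (g * h) = g • c h + c g) :
    DistribMulAction G (M × A) where
  smul g p := (g • p.1 + (g • p.2) • c g, g • p.2)
  one_smul p := by
    show (((1:G) • p.1 + ((1:G) • p.2) • c 1, (1:G) • p.2) : M × A) = p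
    simp [hc1]
  mul_smul g h p := by
    show ((((g*h) • p.1 + ((g*h) • p.2) • c (g*h)), (g*h) • p.2) : M × A)
      = (g • (h • p.1 + (h • p.2) • c h) + (g • (h • p.2)) • c g, g • (h • p.2))
    rw [hcmul]
    refine Prod.ext ?_ ?_
    · simp only [smul_add, mul_smul, hM]
      abel
    · simp [mul_smul]
  smul_zero g := by
    show ((g • (0:M) + (g • (0:A)) • c g, g • (0:A)) : M × A) = 0
    simp
  smul_add g p q := by
    show ((g • (p.1 + q.1) + (g • (p.2 + q.2)) • c g, g • (p.2 + q.2)) : M × A)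
      = (g • p.1 + (g • p.2) • c g + (g • q.1 + (g • q.2) • c g), g • p.2 + g • q.2)
    refine Prod.ext ?_ ?_
    · simp only [smul_add, add_smul]
      abel
    · simp [smul_add]

/-- "modulification", converse assertion of Lemma 4.11 of the paper.
A nonempty `G`-affine space `X` over `A`, i.e. a `G`-equivariant torsor under a
`(G,A)`-module `M`, arises canonically as `π⁻¹(1)` for an exact sequence of
`(G,A)`-modules `0 → M → E → A → 0`. -/
theorem exists_modulification
    (G A M X : Type) [Group G] [CommRing A] [MulSemiringAction G A]
    [AddCommGroup M] [Module A M] [DistribMulAction G M]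
    (hM : ∀ (g : G) (a : A) (m : M), g • (a • m) = (g • a) • (g • m))
    [Nonempty X] [MulAction G X] [AddAction M X]
    (hcompat : ∀ (g : G) (m : M) (x : X), g • (m +ᵥ x) = (g • m) +ᵥ (g • x))
    (htrans : ∀ x y : X, ∃! m : M, y = m +ᵥ x) :
    Nonempty (ModulificationOf G A M X) := by
  classical
  obtain ⟨x₀⟩ := ‹Nonempty X›
  let v : X → M := fun x => (htrans x₀ x).choose
  have hv_spec : ∀ x : X, x = v x +ᵥ x₀ := fun x => (htrans x₀ x).choose_spec.1
  have hv_unique : ∀ (x : X) (m : M), x = m +ᵥ x₀ → v x = m := by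
    intro x m hm
    exact ((htrans x₀ x).choose_spec.2 m hm).symm
  let c : G → M := fun g => v (g • x₀)
  have hc_spec : ∀ g : G, g • x₀ = c g +ᵥ x₀ := fun g => hv_spec (g • x₀)
  have hc1 : c 1 = 0 := hv_unique _ 0 (by simp)
  have hcmul : ∀ g h : G, c (g * h) = g • c h + c g := by
    intro g h
    refine hv_unique _ _ ?_
    rw [mul_smul, hc_spec h, hcompat, hc_spec g, vadd_vadd]
  letI gact : DistribMulAction G (M × A) := twistedAction hM c hc1 hcmul
  have hv_vadd : ∀ (m : M) (x : X), v (m +ᵥ x) = m + v x := by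
    intro m x
    refine hv_unique _ _ ?_
    rw [← vadd_vadd, ← hv_spec]
  have hv_smul : ∀ (g : G) (x : X), v (g • x) = g • v x + c g := by
    intro g x
    refine hv_unique _ _ ?_
    conv_lhs => rw [hv_spec x]
    rw [hcompat, hc_spec g, vadd_vadd]
  refine ⟨{
    E := M × A
    gActionE := gact
    semilinear := by
      intro g a e
      refine Prod.ext ?_ ?_
      · show g • (a • e.1) + (g • (a * e.2)) • c g
          = (g • a) • (g • e.1 + (g • e.2) • c g)
        rw [hM, smul_mul', smul_add, smul_smul]
      · show g • (a * e.2) = (g • a) * (g • e.2)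
        rw [smul_mul']
    i := LinearMap.inl A M A
    i_injective := LinearMap.inl_injective
    i_equivariant := by
      intro g m
      refine Prod.ext ?_ ?_
      · show g • m = g • m + (g • (0:A)) • c g
        simp
      · show (0:A) = g • (0:A)
        simp
    π := LinearMap.snd A M A
    π_surjective := fun a => ⟨(0, a), rfl⟩
    π_equivariant := fun g e => rfl
    ker_eq_range := by
      ext p
      simp only [LinearMap.mem_ker, LinearMap.snd_apply, LinearMap.mem_range,
        LinearMap.inl_apply]
      constructor
      · intro h
        exact ⟨p.1, by rw [← h]⟩
      · rintro ⟨m, rfl⟩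
        rfl
    θ := fun x => (v x, 1)
    θ_mem := fun x => rfl
    θ_injective := by
      intro x y hxy
      have : v x = v y := congrArg Prod.fst hxy
      rw [hv_spec x, hv_spec y, this]
    θ_surjective := by
      intro e he
      refine ⟨e.1 +ᵥ x₀, ?_⟩
      have h1 : v (e.1 +ᵥ x₀) = e.1 := hv_unique _ _ rfl
      have h2 : e.2 = 1 := he
      exact Prod.ext h1 h2.symm
    θ_equivariant := by
      intro g x
      refine Prod.ext ?_ ?_
      · show v (g • x) = g • v x + (g • (1:A)) • c g
        rw [hv_smul, smul_one, one_smul]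
      · show (1:A) = g • (1:A)
        rw [smul_one]
    θ_translation := by
      intro m x
      refine Prod.ext ?_ ?_
      · show v (m +ᵥ x) = m + v x
        exact hv_vadd m x
      · show (1:A) = 0 + 1
        rw [zero_add]
  }⟩
end

section
/- Let p be a prime and A a commutative ring in which p·1 = 0. Let f₁, …, f_N ∈ A be elements generating the unit ideal, and fix integers r ≥ 1 and j with 1 ≤ j ≤ r − 1. Let s be an element of W_r(A), the ring of p-typical Witt vectors of length r over A, and suppose that for each i = 1, …, N the image of s under the ring homomorphism W_r(A) → W_r(A_{f_i}) induced by the localization map A → A_{f_i} is divisible by p^j in W_r(A_{f_i}). Then Frob^{r−1}(s) is divisible by p^j in W_r(A), where Frob is the Frobenius endomorphism of W_r(A) induced by a ↦ a^p. (This is the local-to-global divisibility claim proved inside the paper's Lemma 10.5, via the factorization of multiplication by p^j through truncation and Teichmüller lifts.) -/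
/-- The functorial map on truncated Witt vectors induced by a map on coefficients
(for a ring homomorphism `f`, this is the map `W_r(f)`, which acts coefficientwise). -/
def wittMap (p : ℕ) {A B : Type} [CommRing A] [CommRing B] {r : ℕ} (f : A → B)
    (w : TruncatedWittVector p r A) : TruncatedWittVector p r B :=
  TruncatedWittVector.mk p fun i => f (w.coeff i)

/-- The Frobenius endomorphism of `W_r(A)` induced functorially by `a ↦ a ^ p`. -/
def wittFrob (p : ℕ) {A : Type} [CommRing A] {r : ℕ}
    (w : TruncatedWittVector p r A) : TruncatedWittVector p r A :=
  wittMap p (fun a => a ^ p) w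

section Aux

variable {p : ℕ} [hp : Fact p.Prime] {B : Type} [CommRing B] [CharP B p]

open WittVector TruncatedWittVector

lemma wv_mul_p_pow_coeff_lt (x : WittVector p B) :
    ∀ {j i : ℕ}, i < j → (x * (p : WittVector p B) ^ j).coeff i = 0 := by
  intro j
  induction j generalizing x with
  | zero => intro i h; exact absurd h (Nat.not_lt_zero i)
  | succ j ih =>
    intro i h
    rw [pow_succ, ← mul_assoc]
    cases i with
    | zero => exact WittVector.mul_charP_coeff_zero _
    | succ i =>
      rw [WittVector.mul_charP_coeff_succ, ih x (Nat.succ_lt_succ_iff.mp h),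
        zero_pow hp.out.ne_zero]

lemma wv_mul_p_pow_coeff (x : WittVector p B) (j k : ℕ) :
    (x * (p : WittVector p B) ^ j).coeff (k + j) = x.coeff k ^ p ^ j := by
  induction j generalizing x with
  | zero => simp
  | succ j ih =>
    rw [pow_succ, ← mul_assoc, show k + (j + 1) = (k + j) + 1 from rfl,
      WittVector.mul_charP_coeff_succ, ih, ← pow_mul, ← pow_succ]

lemma twv_p_pow_mul_coeff_lt {r : ℕ} (w : TruncatedWittVector p r B) {j : ℕ} (i : Fin r)
    (h : (i : ℕ) < j) :
    ((p : TruncatedWittVector p r B) ^ j * w).coeff i = 0 := by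
  obtain ⟨W, rfl⟩ := WittVector.truncate_surjective (p := p) r (R := B) w
  rw [show (p : TruncatedWittVector p r B) ^ j * WittVector.truncate r W
      = WittVector.truncate r ((p : WittVector p B) ^ j * W) by
    rw [map_mul, map_pow, map_natCast]]
  rw [WittVector.coeff_truncate, mul_comm]
  exact wv_mul_p_pow_coeff_lt W h

lemma twv_p_pow_mul_coeff_ge {r : ℕ} (w : TruncatedWittVector p r B) {j : ℕ} (i : Fin r)
    (k : ℕ) (hk : k + j = (i : ℕ)) (hkr : k < r) :
    ((p : TruncatedWittVector p r B) ^ j * w).coeff i = w.coeff ⟨k, hkr⟩ ^ p ^ j := by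
  obtain ⟨W, rfl⟩ := WittVector.truncate_surjective (p := p) r (R := B) w
  rw [show (p : TruncatedWittVector p r B) ^ j * WittVector.truncate r W
      = WittVector.truncate r ((p : WittVector p B) ^ j * W) by
    rw [map_mul, map_pow, map_natCast]]
  rw [WittVector.coeff_truncate, mul_comm, ← hk, wv_mul_p_pow_coeff, WittVector.coeff_truncate]

lemma wittFrob_iterate_coeff {A : Type} [CommRing A] {r : ℕ}
    (n : ℕ) (w : TruncatedWittVector p r A) (i : Fin r) :
    ((wittFrob p)^[n] w).coeff i = w.coeff i ^ p ^ n := by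
  induction n generalizing w with
  | zero => simp
  | succ n ih =>
    rw [Function.iterate_succ_apply']
    show (TruncatedWittVector.mk p
      (fun k => (((wittFrob p)^[n] w).coeff k) ^ p)).coeff i = _
    rw [TruncatedWittVector.coeff_mk, ih, ← pow_mul, ← pow_succ]

lemma eq_zero_of_localization_away {A : Type} [CommRing A] {N : ℕ} (f : Fin N → A)
    (hf : Ideal.span (Set.range f) = ⊤) (a : A)
    (h : ∀ i : Fin N, algebraMap A (Localization.Away (f i)) a = 0) : a = 0 := by
  rw [← Ideal.torsionOf_eq_top_iff (R := A)]
  rw [← Ideal.radical_eq_top]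
  rw [eq_top_iff, ← hf, Ideal.span_le]
  rintro x ⟨i, rfl⟩
  obtain ⟨⟨m, n, rfl⟩, hm⟩ := (IsLocalization.map_eq_zero_iff
    (Submonoid.powers (f i)) (Localization.Away (f i)) a).mp (h i)
  exact ⟨n, (Ideal.mem_torsionOf_iff a _).mpr (by simpa [smul_eq_mul] using hm)⟩

end Aux

/-- local-to-global divisibility, from Lemma 10.5 of the paper.
Let `A` be a commutative ring of characteristic `p`, let `f₁, …, f_N` generate the unit
ideal of `A`, and let `1 ≤ j ≤ r - 1`.  If `s ∈ W_r(A)` becomes divisible by `p^j` in each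
localization `W_r(A_{f_i})`, then `Frob^{r-1}(s)` is divisible by `p^j` in `W_r(A)`. -/
theorem frob_pow_div_of_locally_div
    (p : ℕ) [Fact p.Prime] (A : Type) [CommRing A] [CharP A p]
    (N : ℕ) (f : Fin N → A) (hf : Ideal.span (Set.range f) = ⊤)
    (r j : ℕ) (hr : 1 ≤ r) (hj1 : 1 ≤ j) (hj2 : j ≤ r - 1)
    (s : TruncatedWittVector p r A)
    (hs : ∀ i : Fin N,
      (p : TruncatedWittVector p r (Localization.Away (f i))) ^ j ∣
        wittMap p (algebraMap A (Localization.Away (f i))) s) :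
    (p : TruncatedWittVector p r A) ^ j ∣ (wittFrob p)^[r - 1] s := by
  have hp : Fact p.Prime := inferInstance
  -- Step 1: the first `j` coefficients of `s` vanish.
  have hzero : ∀ i : Fin r, (i : ℕ) < j → s.coeff i = 0 := by
    intro i hi
    apply eq_zero_of_localization_away f hf
    intro n
    rcases subsingleton_or_nontrivial (Localization.Away (f n)) with hS | hN
    · exact Subsingleton.elim _ _
    haveI : CharP (Localization.Away (f n)) p := by
      have hpz : ((p : ℕ) : Localization.Away (f n)) = 0 := by
        rw [← map_natCast (algebraMap A (Localization.Away (f n))) p,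
          CharP.cast_eq_zero, map_zero]
      have hdvd : ringChar (Localization.Away (f n)) ∣ p := ringChar.dvd hpz
      rcases (Nat.Prime.eq_one_or_self_of_dvd (Fact.out) _ hdvd) with h1 | hP
      · exact absurd h1 (CharP.ringChar_ne_one)
      · exact hP ▸ ringChar.charP _
    obtain ⟨t, ht⟩ := hs n
    have : (wittMap p (algebraMap A (Localization.Away (f n))) s).coeff i
        = algebraMap A (Localization.Away (f n)) (s.coeff i) :=
      TruncatedWittVector.coeff_mk _ _
    rw [← this, ht, twv_p_pow_mul_coeff_lt t i hi]
  -- Step 2: construct the witness.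
  refine ⟨TruncatedWittVector.mk p (fun k =>
    if h : (k : ℕ) + j < r then s.coeff ⟨(k : ℕ) + j, h⟩ ^ p ^ (r - 1 - j) else 0), ?_⟩
  apply TruncatedWittVector.ext
  intro i
  rw [wittFrob_iterate_coeff]
  by_cases hi : (i : ℕ) < j
  · rw [twv_p_pow_mul_coeff_lt _ i hi, hzero i hi,
      zero_pow (pow_ne_zero _ hp.out.ne_zero)]
  · push_neg at hi
    have hk : (i : ℕ) - j + j = (i : ℕ) := Nat.sub_add_cancel hi
    have hkr : (i : ℕ) - j < r := lt_of_le_of_lt (Nat.sub_le _ _) i.isLt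
    rw [twv_p_pow_mul_coeff_ge _ i _ hk hkr, TruncatedWittVector.coeff_mk]
    have h' : ((⟨(i : ℕ) - j, hkr⟩ : Fin r) : ℕ) + j < r := by
      simpa [hk] using i.isLt
    rw [dif_pos h']
    have : (⟨((⟨(i : ℕ) - j, hkr⟩ : Fin r) : ℕ) + j, h'⟩ : Fin r) = i := by
      apply Fin.ext; simpa using hk
    rw [this, ← pow_mul, ← pow_add, Nat.sub_add_cancel hj2]
end
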